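/- arXiv:1604.04111 — 4 statements merged into one kernel-verified Lean document; each statement's English description precedes it below -/
import Mathlib

section
/- Let G be a graph with a vertex cover S of size at most k such that every vertex of S has degree at most k in G. Then the number of edges of G with both endpoints outside the set H of vertices of degree at least k+1 is at most k². -/
/-- Let `G` have a vertex cover `S` of size at most `k` all of whose vertices
have degree at most `k`. Then the number of edges of `G` with both endpoints
outside the set `H` of vertices of degree at least `k+1` is at most `k²`. -/
theorem edges_avoiding_high_degree_le {V : Type*} [Fintype V] [DecidableEq V]
    (G : SimpleGraph V) [DecidableRel G.Adj] (k : ℕ) (S : Finset V)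
    (hVC : ∀ u v : V, G.Adj u v → u ∈ S ∨ v ∈ S) (hS : S.card ≤ k)
    (hdegS : ∀ v ∈ S, G.degree v ≤ k) :
    (G.edgeFinset.filter
        (fun e => ∀ v ∈ e, v ∉ Finset.univ.filter (fun w => k + 1 ≤ G.degree w))).card
      ≤ k ^ 2 := by
  calc (G.edgeFinset.filter
        (fun e => ∀ v ∈ e, v ∉ Finset.univ.filter (fun w => k + 1 ≤ G.degree w))).card
      ≤ (S.biUnion (fun v => G.incidenceFinset v)).card := by
        apply Finset.card_le_card
        intro e he
        simp only [Finset.mem_filter, SimpleGraph.mem_edgeFinset] at he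
        induction e with
        | _ u v =>
          rcases hVC u v he.1 with h | h
          · exact Finset.mem_biUnion.2 ⟨u, h, by
              simp [SimpleGraph.mem_incidenceFinset, SimpleGraph.incidenceSet, he.1]⟩
          · exact Finset.mem_biUnion.2 ⟨v, h, by
              simp [SimpleGraph.mem_incidenceFinset, SimpleGraph.incidenceSet, he.1]⟩
    _ ≤ ∑ v ∈ S, (G.incidenceFinset v).card := Finset.card_biUnion_le
    _ ≤ ∑ v ∈ S, k := Finset.sum_le_sum (fun v hv => by
        rw [SimpleGraph.card_incidenceFinset_eq_degree]; exact hdegS v hv)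
    _ = S.card * k := by rw [Finset.sum_const, smul_eq_mul]
    _ ≤ k * k := Nat.mul_le_mul_right k hS
    _ = k ^ 2 := (sq k).symm
end

section
/- Let G be an interval graph given by a family of intervals, let Λ : V(G) → [k] be a labelling such that each label class Λ⁻¹(i) is an independent set, and call a label rich if at least k vertices carry it. Then there exists an independent set S in G whose label set Λ(S) equals exactly the set of rich labels, with S containing exactly one vertex of each rich label. -/
/-- Greedy transversal lemma: given `r` classes, each containing at least `r`
pairwise disjoint intervals, one may choose one interval from each class so
that the chosen intervals are pairwise disjoint. -/
lemma rich_aux {V : Type*} [Fintype V] [DecidableEq V] [Nonempty V] {k : ℕ}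
    (a b : V → ℝ) (hab : ∀ v, a v ≤ b v) :
    ∀ (r : ℕ) (T : Finset (Fin k)) (C : Fin k → Finset V), T.card = r →
      (∀ i ∈ T, r ≤ (C i).card) →
      (∀ i ∈ T, ∀ v ∈ C i, ∀ w ∈ C i, v ≠ w →
        Set.Icc (a v) (b v) ∩ Set.Icc (a w) (b w) = ∅) →
      ∃ f : Fin k → V, (∀ i ∈ T, f i ∈ C i) ∧
        (∀ i ∈ T, ∀ j ∈ T, i ≠ j →
          Set.Icc (a (f i)) (b (f i)) ∩ Set.Icc (a (f j)) (b (f j)) = ∅) := by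
  intro r
  induction r with
  | zero =>
    intro T C hT _ _
    have hTe : T = ∅ := Finset.card_eq_zero.mp hT
    subst hTe
    exact ⟨fun _ => Classical.arbitrary V, by simp, by simp⟩
  | succ r ih =>
    intro T C hT hcard hdisj
    have hTne : T.Nonempty := Finset.card_pos.mp (by omega)
    have hUne : (T.biUnion C).Nonempty := by
      obtain ⟨i, hi⟩ := hTne
      have : (C i).Nonempty := Finset.card_pos.mp (by have := hcard i hi; omega)
      obtain ⟨v, hv⟩ := this
      exact ⟨v, Finset.mem_biUnion.mpr ⟨i, hi, hv⟩⟩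
    obtain ⟨v₀, hv₀U, hv₀min⟩ := Finset.exists_min_image (T.biUnion C) b hUne
    obtain ⟨i₀, hi₀, hv₀C⟩ := Finset.mem_biUnion.mp hv₀U
    set T' := T.erase i₀ with hT'
    set C' : Fin k → Finset V := fun i => (C i).filter (fun w => b v₀ < a w) with hC'
    -- each pruned class still has at least r elements
    have hcard' : ∀ i ∈ T', r ≤ (C' i).card := by
      intro i hi
      have hiT : i ∈ T := Finset.mem_of_mem_erase hi
      have hsplit := Finset.card_filter_add_card_filter_not
        (s := C i) (p := fun w => b v₀ < a w)
      have hone : ((C i).filter (fun w => ¬ b v₀ < a w)).card ≤ 1 := by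
        apply Finset.card_le_one.mpr
        intro w hw w' hw'
        simp only [Finset.mem_filter, not_lt] at hw hw'
        by_contra hne
        have hdis := hdisj i hiT w hw.1 w' hw'.1 hne
        have hmem : b v₀ ∈ Set.Icc (a w) (b w) ∩ Set.Icc (a w') (b w') := by
          constructor
          · exact ⟨hw.2, hv₀min w (Finset.mem_biUnion.mpr ⟨i, hiT, hw.1⟩)⟩
          · exact ⟨hw'.2, hv₀min w' (Finset.mem_biUnion.mpr ⟨i, hiT, hw'.1⟩)⟩
        rw [hdis] at hmem
        exact hmem
      have := hcard i hiT
      have hCC : (C' i).card = ((C i).filter (fun w => b v₀ < a w)).card := rfl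
      omega
    have hdisj' : ∀ i ∈ T', ∀ v ∈ C' i, ∀ w ∈ C' i, v ≠ w →
        Set.Icc (a v) (b v) ∩ Set.Icc (a w) (b w) = ∅ := by
      intro i hi v hv w hw hne
      exact hdisj i (Finset.mem_of_mem_erase hi) v (Finset.mem_of_mem_filter v hv)
        w (Finset.mem_of_mem_filter w hw) hne
    have hT'card : T'.card = r := by
      rw [hT', Finset.card_erase_of_mem hi₀, hT]
      omega
    obtain ⟨f', hf'1, hf'2⟩ := ih T' C' hT'card hcard' hdisj'
    refine ⟨fun i => if i = i₀ then v₀ else f' i, ?_, ?_⟩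
    · intro i hi
      by_cases h : i = i₀
      · simp only [if_pos h, h]; exact hv₀C
      · simp only [if_neg h]
        exact Finset.mem_of_mem_filter _ (hf'1 i (Finset.mem_erase.mpr ⟨h, hi⟩))
    · intro i hi j hj hij
      by_cases h1 : i = i₀
      · have h2 : ¬ j = i₀ := fun h => hij (h1.trans h.symm)
        have hj' : j ∈ T' := Finset.mem_erase.mpr ⟨h2, hj⟩
        have hm := hf'1 j hj'
        simp only [hC', Finset.mem_filter] at hm
        simp only [if_pos h1, if_neg h2]
        apply Set.eq_empty_iff_forall_notMem.mpr
        rintro x ⟨⟨_, hx2⟩, ⟨hx3, _⟩⟩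
        have := hm.2
        linarith
      · by_cases h2 : j = i₀
        · have hi' : i ∈ T' := Finset.mem_erase.mpr ⟨h1, hi⟩
          have hm := hf'1 i hi'
          simp only [hC', Finset.mem_filter] at hm
          simp only [if_pos h2, if_neg h1]
          apply Set.eq_empty_iff_forall_notMem.mpr
          rintro x ⟨⟨hx1, _⟩, ⟨_, hx4⟩⟩
          have := hm.2
          linarith
        · simp only [if_neg h1, if_neg h2]
          exact hf'2 i (Finset.mem_erase.mpr ⟨h1, hi⟩)
            j (Finset.mem_erase.mpr ⟨h2, hj⟩) hij

/-- Let `G` be an interval graph given by intervals `[a v, b v]`, and let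
`Λ : V → Fin k` be a labelling whose label classes are independent sets.
Call a label rich if at least `k` vertices carry it. Then there is an
independent set `S` (pairwise disjoint intervals) containing exactly one
vertex of each rich label, whose label set is exactly the set of rich labels. -/
theorem rich_labels_realizable {V : Type*} [Fintype V] [DecidableEq V] (k : ℕ)
    (a b : V → ℝ) (hab : ∀ v, a v ≤ b v) (Λ : V → Fin k)
    (hInd : ∀ v w : V, v ≠ w → Λ v = Λ w →
      Set.Icc (a v) (b v) ∩ Set.Icc (a w) (b w) = ∅) :
    ∃ S : Finset V,
      (∀ v ∈ S, ∀ w ∈ S, v ≠ w →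
        Set.Icc (a v) (b v) ∩ Set.Icc (a w) (b w) = ∅) ∧
      Set.InjOn Λ (S : Set V) ∧
      S.image Λ = Finset.univ.filter
        (fun i : Fin k => k ≤ (Finset.univ.filter (fun v : V => Λ v = i)).card) := by
  by_cases hV : IsEmpty V
  · refine ⟨∅, by simp, by simp, ?_⟩
    ext i
    have hi : 0 < k := i.pos
    simp only [Finset.image_empty, Finset.notMem_empty, false_iff, Finset.mem_filter]
    rintro ⟨-, hle⟩
    have : (Finset.univ : Finset V) = ∅ := Finset.univ_eq_empty
    rw [this] at hle
    simp at hle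
    omega
  · have : Nonempty V := not_isEmpty_iff.mp hV
    set R := Finset.univ.filter
      (fun i : Fin k => k ≤ (Finset.univ.filter (fun v : V => Λ v = i)).card) with hR
    set C : Fin k → Finset V := fun i => Finset.univ.filter (fun v => Λ v = i) with hC
    have hRk : R.card ≤ k := by
      calc R.card ≤ (Finset.univ : Finset (Fin k)).card := Finset.card_filter_le _ _
        _ = k := by simp
    have hcard : ∀ i ∈ R, R.card ≤ (C i).card := by
      intro i hi
      simp only [hR, Finset.mem_filter] at hi
      exact le_trans hRk hi.2
    have hdisj : ∀ i ∈ R, ∀ v ∈ C i, ∀ w ∈ C i, v ≠ w →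
        Set.Icc (a v) (b v) ∩ Set.Icc (a w) (b w) = ∅ := by
      intro i _ v hv w hw hne
      simp only [hC, Finset.mem_filter] at hv hw
      exact hInd v w hne (hv.2.trans hw.2.symm)
    obtain ⟨f, hf1, hf2⟩ := rich_aux a b hab R.card R C rfl hcard hdisj
    have hΛf : ∀ i ∈ R, Λ (f i) = i := by
      intro i hi
      have := hf1 i hi
      simp only [hC, Finset.mem_filter] at this
      exact this.2
    refine ⟨R.image f, ?_, ?_, ?_⟩
    · intro v hv w hw hne
      obtain ⟨i, hi, rfl⟩ := Finset.mem_image.mp hv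
      obtain ⟨j, hj, rfl⟩ := Finset.mem_image.mp hw
      have hij : i ≠ j := fun h => hne (by rw [h])
      exact hf2 i hi j hj hij
    · intro v hv w hw hΛ
      simp only [Finset.coe_image, Set.mem_image, Finset.mem_coe] at hv hw
      obtain ⟨i, hi, rfl⟩ := hv
      obtain ⟨j, hj, rfl⟩ := hw
      have : i = j := by rw [← hΛf i hi, ← hΛf j hj, hΛ]
      rw [this]
    · ext i
      simp only [Finset.mem_image]
      constructor
      · rintro ⟨v, hv, rfl⟩
        obtain ⟨j, hj, rfl⟩ := hv
        rwa [hΛf j hj]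
      · intro hi
        exact ⟨f i, ⟨i, hi, rfl⟩, hΛf i hi⟩
end

section
/- Let n ≥ 1 and d ≥ 1, and let X₁, ..., Xₜ be reals with 0 ≤ Xᵢ ≤ n−1 for all i and Σᵢ Xᵢ ≤ n·d. Then ∏ᵢ (1 − Xᵢ/n) ≥ (1/n^{2d})·(1/4)^d. -/
/-!
Put `a = 1/(4n²)`. Since `y ↦ a ^ y` is convex, it lies below the chord joining `(0, 1)` and
`(1 - 1/n, a ^ (1 - 1/n))`, and `a ^ (1 - 1/n) ≤ (4n²)^(-1/2) ≤ 1/n`; so the chord lies below `1 - y`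
and `1 - y ≥ a ^ y` for `0 ≤ y ≤ 1 - 1/n`. Multiplying over `yᵢ = Xᵢ/n` gives
`∏ (1 - yᵢ) ≥ a ^ (∑ yᵢ) ≥ a ^ d`.
-/

open Real Finset

lemma rpow_le_one_sub_of_rpow_le {a b y : ℝ} (ha : 0 < a) (hab : a ^ b ≤ 1 - b)
    (hy0 : 0 ≤ y) (hyb : y ≤ b) : a ^ y ≤ 1 - y := by
  rcases hyb.eq_or_lt with rfl | hyb
  · exact hab
  have hb : 0 < b := hy0.trans_lt hyb
  have hchord := (convexOn_rpow_left ha).2 (Set.mem_univ 0) (Set.mem_univ b)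
    (sub_nonneg.2 ((div_le_one hb).2 hyb.le)) (div_nonneg hy0 hb.le) (sub_add_cancel 1 (y / b))
  have hy : y / b * b = y := div_mul_cancel₀ y hb.ne'
  simp only [smul_eq_mul, mul_zero, zero_add, hy, rpow_zero, mul_one] at hchord
  nlinarith [mul_le_mul_of_nonneg_left hab (div_nonneg hy0 hb.le)]

lemma one_div_four_mul_sq_rpow_le (n : ℕ) (hn : 1 ≤ n) :
    (1 / (4 * (n : ℝ) ^ 2)) ^ (1 - 1 / (n : ℝ)) ≤ 1 - (1 - 1 / (n : ℝ)) := by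
  rw [sub_sub_cancel]
  rcases hn.eq_or_lt with rfl | hn
  · norm_num
  have hn' : (2 : ℝ) ≤ n := by exact_mod_cast hn
  have ha : 0 < 1 / (4 * (n : ℝ) ^ 2) := by positivity
  have hexp : (1 : ℝ) / 2 ≤ 1 - 1 / n := by
    rw [le_sub_comm, div_le_iff₀ (by positivity)]
    linarith
  calc (1 / (4 * (n : ℝ) ^ 2)) ^ (1 - 1 / (n : ℝ))
      ≤ (1 / (4 * (n : ℝ) ^ 2)) ^ ((1 : ℝ) / 2) :=
        rpow_le_rpow_of_exponent_ge ha (div_le_one_of_le₀ (by nlinarith) (by positivity)) hexp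
    _ = 1 / (2 * n) := by
        rw [← sqrt_eq_rpow, show 1 / (4 * (n : ℝ) ^ 2) = (1 / (2 * n)) ^ 2 by ring,
          sqrt_sq (by positivity)]
    _ ≤ 1 / n := one_div_le_one_div_of_le (by positivity) (by linarith)

theorem prod_one_sub_lower_bound_general (n d t : ℕ) (hn : 1 ≤ n)
    (X : Fin t → ℝ) (hX0 : ∀ i, 0 ≤ X i) (hX1 : ∀ i, X i ≤ (n : ℝ) - 1)
    (hsum : ∑ i, X i ≤ (n : ℝ) * d) :
    (1 / (n : ℝ) ^ (2 * d)) * (1 / 4) ^ d ≤ ∏ i, (1 - X i / n) := by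
  have hn0 : (0 : ℝ) < n := by exact_mod_cast hn
  set a : ℝ := 1 / (4 * (n : ℝ) ^ 2)
  have ha0 : 0 < a := by positivity
  have ha1 : a ≤ 1 :=
    div_le_one_of_le₀ (by nlinarith [(Nat.one_le_cast (α := ℝ)).2 hn]) (by positivity)
  have hfactor (i : Fin t) : a ^ (X i / n) ≤ 1 - X i / n := by
    refine rpow_le_one_sub_of_rpow_le ha0 (one_div_four_mul_sq_rpow_le n hn)
      (div_nonneg (hX0 i) hn0.le) ?_
    rw [div_le_iff₀ hn0, sub_mul, one_div_mul_cancel hn0.ne']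
    linarith [hX1 i]
  have hexp : ∑ i, X i / n ≤ d := by
    rw [← sum_div, div_le_iff₀ hn0]
    linarith
  calc (1 / (n : ℝ) ^ (2 * d)) * (1 / 4) ^ d = a ^ (d : ℝ) := by
        rw [rpow_natCast, pow_mul, ← one_div_pow, ← mul_pow]
        ring
    _ ≤ a ^ (∑ i, X i / n) := rpow_le_rpow_of_exponent_ge ha0 ha1 hexp
    _ = ∏ i, a ^ (X i / n) := rpow_sum_of_pos ha0 _ _
    _ ≤ ∏ i, (1 - X i / n) :=
        prod_le_prod (fun i _ => (rpow_pos_of_pos ha0 _).le) (fun i _ => hfactor i)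

/-- If `0 ≤ Xᵢ ≤ n − 1` and `Σᵢ Xᵢ ≤ n·d`, then
`∏ᵢ (1 − Xᵢ/n) ≥ (1/n^{2d})·(1/4)^d`. -/
theorem prod_one_sub_lower_bound (n d t : ℕ) (hn : 1 ≤ n) (hd : 1 ≤ d)
    (X : Fin t → ℝ) (hX0 : ∀ i, 0 ≤ X i) (hX1 : ∀ i, X i ≤ (n : ℝ) - 1)
    (hsum : ∑ i, X i ≤ (n : ℝ) * d) :
    (1 / (n : ℝ) ^ (2 * d)) * (1 / 4) ^ d ≤ ∏ i, (1 - X i / n) :=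
  prod_one_sub_lower_bound_general n d t hn X hX0 hX1 hsum
end

section
/- Let G be a graph with m edges and a vertex cover of size k ≥ 1. Then for every linear layout σ of G, val(σ,G) ≥ m²/(4k²), and hence the optimum linear arrangement value satisfies OPT(G) ≥ m²/(4k²). -/
lemma sum_distinct_pos (n : ℕ) (T : Finset ℤ) (h : ∀ t ∈ T, 1 ≤ t) (hn : T.card = n) :
    (T.card : ℤ) * (T.card + 1) ≤ 2 * ∑ t ∈ T, t := by
  induction n generalizing T with
  | zero => simp_all
  | succ n ih =>
    have hne : T.Nonempty := Finset.card_pos.mp (by omega)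
    set M := T.max' hne with hM
    have hMmem : M ∈ T := T.max'_mem hne
    have hsub : T ⊆ Finset.Icc 1 M := fun t ht =>
      Finset.mem_Icc.mpr ⟨h t ht, T.le_max' t ht⟩
    have hcard : T.card ≤ (Finset.Icc (1:ℤ) M).card := Finset.card_le_card hsub
    have hIcc : (Finset.Icc (1:ℤ) M).card = (M + 1 - 1).toNat := Int.card_Icc 1 M
    have hMbig : (T.card : ℤ) ≤ M := by
      have := h M hMmem; rw [hIcc] at hcard
      omega
    have hsum : ∑ t ∈ T.erase M, t + M = ∑ t ∈ T, t := Finset.sum_erase_add T _ hMmem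
    have hcarde : (T.erase M).card = n := by
      rw [Finset.card_erase_of_mem hMmem]; omega
    have hih := ih (T.erase M) (fun t ht => h t (Finset.mem_of_mem_erase ht)) hcarde
    rw [hcarde] at hih
    rw [hn] at hMbig ⊢
    have hexp : ((n:ℤ) + 1) * ((n:ℤ) + 1 + 1) = (n:ℤ) * ((n:ℤ) + 1) + 2 * ((n:ℤ) + 1) := by ring
    push_cast
    push_cast at hih hMbig
    linarith

lemma core_bound {V : Type*} [DecidableEq V] (S : Finset V) (f : V → ℤ) (c : ℤ)
    (hinj : Set.InjOn f S) (hne : ∀ u ∈ S, f u ≠ c) :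
    (S.card : ℤ) ^ 2 ≤ 4 * ∑ u ∈ S, |f u - c| := by
  classical
  set g : V → ℤ := fun u => if c < f u then 2 * (f u - c) else 2 * (c - f u) - 1 with hg
  have hginj : Set.InjOn g S := by
    intro u1 h1 u2 h2 heq
    simp only [hg] at heq
    by_cases a1 : c < f u1 <;> by_cases a2 : c < f u2 <;> simp [a1, a2] at heq <;>
      first
        | (exact hinj h1 h2 (by omega))
        | omega
  set T := S.image g with hT
  have hcardT : T.card = S.card := Finset.card_image_of_injOn hginj
  have hsumT : ∑ t ∈ T, t = ∑ u ∈ S, g u := Finset.sum_image (fun a ha b hb => hginj ha hb)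
  have hpos : ∀ t ∈ T, 1 ≤ t := by
    intro t ht
    obtain ⟨u, hu, rfl⟩ := Finset.mem_image.mp ht
    have := hne u hu
    simp only [hg]
    split <;> omega
  have hle : ∀ u ∈ S, g u ≤ 2 * |f u - c| := by
    intro u hu
    rcases abs_cases (f u - c) with ⟨he, _⟩ | ⟨he, _⟩ <;> simp only [hg] <;> split <;> omega
  have h1 := sum_distinct_pos T.card T hpos rfl
  have h2 : ∑ u ∈ S, g u ≤ 2 * ∑ u ∈ S, |f u - c| := by
    rw [Finset.mul_sum]; exact Finset.sum_le_sum hle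
  rw [hcardT, hsumT] at h1
  nlinarith [h1, h2, Int.natCast_nonneg S.card]

/-- The value `val(σ, G) = Σ_{uv ∈ E(G)} |σ(u) − σ(v)|` of a linear layout. -/
def layoutVal {V : Type*} [Fintype V] [DecidableEq V] (G : SimpleGraph V)
    [DecidableRel G.Adj] (σ : V → ℤ) : ℤ :=
  ∑ e ∈ G.edgeFinset,
    Sym2.lift ⟨fun u v => |σ u - σ v|, fun u v => by simp [abs_sub_comm]⟩ e

lemma layoutVal_nonneg {V : Type*} [Fintype V] [DecidableEq V] (G : SimpleGraph V)
    [DecidableRel G.Adj] (σ : V → ℤ) : 0 ≤ layoutVal G σ := by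
  refine Finset.sum_nonneg fun e he => ?_
  induction e using Sym2.inductionOn with
  | hf u v => simp [abs_nonneg]

lemma key_bound {V : Type*} [Fintype V] [DecidableEq V]
    (G : SimpleGraph V) [DecidableRel G.Adj] (k m : ℕ) (hk : 1 ≤ k)
    (hm : G.edgeFinset.card = m) (C : Finset V)
    (hVC : ∀ u v : V, G.Adj u v → u ∈ C ∨ v ∈ C) (hC : C.card ≤ k)
    (φ : V → ℤ) (hφ : Function.Injective φ) :
    (m : ℤ) ^ 2 ≤ 4 * (k : ℤ) ^ 2 * layoutVal G φ := by
  classical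
  rcases Nat.eq_zero_or_pos m with rfl | hmpos
  · have h0 := layoutVal_nonneg G φ
    have : (0:ℤ) ≤ 4 * (k : ℤ) ^ 2 * layoutVal G φ :=
      mul_nonneg (by positivity) h0
    simpa using this
  -- m ≤ sum of degrees over C
  have hsub : G.edgeFinset ⊆ C.biUnion (fun v => G.incidenceFinset v) := by
    intro e he
    induction e using Sym2.inductionOn with
    | hf u v =>
      have hadj : G.Adj u v := by simpa using he
      rcases hVC u v hadj with h | h
      · exact Finset.mem_biUnion.mpr ⟨u, h, by
          rw [SimpleGraph.mem_incidenceFinset]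
          exact ⟨SimpleGraph.mem_edgeSet G |>.mpr hadj, Sym2.mem_mk_left u v⟩⟩
      · exact Finset.mem_biUnion.mpr ⟨v, h, by
          rw [SimpleGraph.mem_incidenceFinset]
          exact ⟨SimpleGraph.mem_edgeSet G |>.mpr hadj, Sym2.mem_mk_right u v⟩⟩
  have h1 : m ≤ ∑ v ∈ C, G.degree v := by
    calc m = G.edgeFinset.card := hm.symm
    _ ≤ (C.biUnion (fun v => G.incidenceFinset v)).card := Finset.card_le_card hsub
    _ ≤ ∑ v ∈ C, (G.incidenceFinset v).card := Finset.card_biUnion_le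
    _ = ∑ v ∈ C, G.degree v := by
        refine Finset.sum_congr rfl fun v _ => ?_
        exact G.card_incidenceFinset_eq_degree v
  -- exists v with m ≤ k * deg v
  have hCne : C.Nonempty := by
    obtain ⟨e, he⟩ := Finset.card_pos.mp (hm ▸ hmpos)
    obtain ⟨v, hv, _⟩ := Finset.mem_biUnion.mp (hsub he)
    exact ⟨v, hv⟩
  obtain ⟨v, hvC, hvdeg⟩ : ∃ v ∈ C, m ≤ k * G.degree v := by
    by_contra hcon
    push_neg at hcon
    have : ∑ w ∈ C, k * G.degree w < ∑ _w ∈ C, m :=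
      Finset.sum_lt_sum_of_nonempty hCne fun w hw => hcon w hw
    rw [Finset.sum_const, smul_eq_mul, ← Finset.mul_sum] at this
    have : k * (∑ w ∈ C, G.degree w) < k * m :=
      lt_of_lt_of_le this (Nat.mul_le_mul_right m hC)
    have := Nat.lt_of_mul_lt_mul_left this
    omega
  -- sum over neighbors of v bounds layoutVal
  set F : Sym2 V → ℤ :=
    Sym2.lift ⟨fun u w => |φ u - φ w|, fun u w => by simp [abs_sub_comm]⟩ with hF
  have hE' : (G.neighborFinset v).image (fun u => s(v, u)) ⊆ G.edgeFinset := by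
    intro e he
    obtain ⟨u, hu, rfl⟩ := Finset.mem_image.mp he
    have hadj : G.Adj v u := (G.mem_neighborFinset v u).mp hu
    simpa using hadj
  have hsum1 : ∑ e ∈ (G.neighborFinset v).image (fun u => s(v, u)), F e
      = ∑ u ∈ G.neighborFinset v, |φ u - φ v| := by
    rw [Finset.sum_image (fun a _ b _ h => by simpa using (Sym2.congr_right.mp h))]
    refine Finset.sum_congr rfl fun u _ => ?_
    simp [hF, abs_sub_comm]
  have h3 : ∑ u ∈ G.neighborFinset v, |φ u - φ v| ≤ layoutVal G φ := by
    rw [← hsum1]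
    refine Finset.sum_le_sum_of_subset_of_nonneg hE' fun e _ _ => ?_
    induction e using Sym2.inductionOn with
    | hf a b => simp [hF, abs_nonneg]
  have h4 : ((G.degree v : ℤ)) ^ 2 ≤ 4 * ∑ u ∈ G.neighborFinset v, |φ u - φ v| := by
    have := core_bound (G.neighborFinset v) φ (φ v) (hφ.injOn)
      (fun u hu => fun hEq => (G.mem_neighborFinset v u |>.mp hu).ne' (hφ hEq))
    rwa [G.card_neighborFinset_eq_degree v] at this
  have h5 : (m : ℤ) ≤ (k : ℤ) * (G.degree v : ℤ) := by exact_mod_cast hvdeg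
  have h6 : ((G.degree v : ℤ)) ^ 2 ≤ 4 * layoutVal G φ := by linarith
  nlinarith [h5, h6, Int.natCast_nonneg m, Int.natCast_nonneg k,
    Int.natCast_nonneg (G.degree v)]


/-- If `G` has `m` edges and a vertex cover of size at most `k ≥ 1`, then every
linear layout `σ` satisfies `val(σ, G) ≥ m²/(4k²)`, and hence the optimum
linear arrangement value satisfies `OPT(G) ≥ m²/(4k²)`. -/
theorem linear_arrangement_lower_bound {V : Type*} [Fintype V] [DecidableEq V]
    (G : SimpleGraph V) [DecidableRel G.Adj] (k m : ℕ) (hk : 1 ≤ k)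
    (hm : G.edgeFinset.card = m) (C : Finset V)
    (hVC : ∀ u v : V, G.Adj u v → u ∈ C ∨ v ∈ C) (hC : C.card ≤ k) :
    (∀ σ : V ≃ Fin (Fintype.card V),
        (m : ℝ) ^ 2 / (4 * (k : ℝ) ^ 2) ≤
          ((layoutVal G (fun u => ((σ u : ℕ) : ℤ)) : ℤ) : ℝ)) ∧
      (m : ℝ) ^ 2 / (4 * (k : ℝ) ^ 2) ≤
        sInf {x : ℝ | ∃ σ : V ≃ Fin (Fintype.card V),
          x = ((layoutVal G (fun u => ((σ u : ℕ) : ℤ)) : ℤ) : ℝ)} := by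
  classical
  have hmain : ∀ σ : V ≃ Fin (Fintype.card V),
      (m : ℝ) ^ 2 / (4 * (k : ℝ) ^ 2) ≤
        ((layoutVal G (fun u => ((σ u : ℕ) : ℤ)) : ℤ) : ℝ) := by
    intro σ
    have hφ : Function.Injective (fun u => ((σ u : ℕ) : ℤ)) := by
      intro a b hab
      have hab' : ((σ a : ℕ) : ℤ) = ((σ b : ℕ) : ℤ) := hab
      exact σ.injective (Fin.val_injective (by exact_mod_cast hab'))
    have hZ := key_bound G k m hk hm C hVC hC _ hφ
    have hR : (m : ℝ) ^ 2 ≤ 4 * (k : ℝ) ^ 2 *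
        ((layoutVal G (fun u => ((σ u : ℕ) : ℤ)) : ℤ) : ℝ) := by exact_mod_cast hZ
    have hkpos : (0 : ℝ) < 4 * (k : ℝ) ^ 2 := by
      have : (1 : ℝ) ≤ (k : ℝ) := by exact_mod_cast hk
      positivity
    rw [div_le_iff₀ hkpos]
    linarith
  refine ⟨hmain, ?_⟩
  have hne : {x : ℝ | ∃ σ : V ≃ Fin (Fintype.card V),
      x = ((layoutVal G (fun u => ((σ u : ℕ) : ℤ)) : ℤ) : ℝ)}.Nonempty :=
    ⟨_, Fintype.equivFin V, rfl⟩
  refine le_csInf hne ?_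
  rintro x ⟨σ, rfl⟩
  exact hmain σ
end
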